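/- arXiv:2603.18550 — 5 statements merged into one kernel-verified Lean document; each statement's English description precedes it below -/
import Mathlib

section
/- Let 2 ≤ n ≤ k, 0 ≤ i ≤ k-1, q > 0, and 0 ≤ r < 2^q be integers. Set β_n(j) = Σ_{t=0}^{n-1} C(j-1,t) and d_i = 2^q·β_n(k-i) + r·β_n(i+1). Then d_0 - d_i ≥ i. -/
/-!
Put `c = k - i - 1`, so that `k - 1 = c + i`, and let `A`, `B`, `S` be the partial row sums
`∑_{t<n} C(·, t)` of the rows `c + i`, `c` and `i`. Then `d₀ - dᵢ = 2^q (A - B) - r (S - 1)`.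
Comparing the terms `t = 1` gives `A - B ≥ i`, and Vandermonde's identity gives
`C(c, t) + C(i, t) ≤ C(c + i, t)` for `t ≥ 1`, hence `S - 1 ≤ A - B`.
So `d₀ - dᵢ ≥ (2^q - r)(A - B) ≥ A - B ≥ i`.
-/

open Finset

namespace Nat

theorem choose_add_choose_le_add_choose (a b : ℕ) {m : ℕ} (hm : m ≠ 0) :
    a.choose m + b.choose m ≤ (a + b).choose m := by
  have hne : ((m, 0) : ℕ × ℕ) ≠ (0, m) := by simp [hm]
  calc a.choose m + b.choose m
      = ∑ p ∈ {(m, 0), (0, m)}, a.choose p.1 * b.choose p.2 := by simp [sum_pair hne]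
    _ ≤ ∑ p ∈ antidiagonal m, a.choose p.1 * b.choose p.2 :=
        sum_le_sum_of_subset (by simp [insert_subset_iff])
    _ = (a + b).choose m := (add_choose_eq a b m).symm

theorem sum_range_choose_zero {n : ℕ} (hn : n ≠ 0) : ∑ t ∈ range n, choose 0 t = 1 := by
  obtain ⟨n, rfl⟩ := exists_eq_succ_of_ne_zero hn
  simp [sum_range_succ']

theorem sum_range_choose_add_sum_range_choose_le (a b n : ℕ) :
    ∑ t ∈ range n, a.choose t + ∑ t ∈ range n, b.choose t
      ≤ 1 + ∑ t ∈ range n, (a + b).choose t := by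
  cases n with
  | zero => simp
  | succ n =>
    simp only [sum_range_succ', choose_zero_right]
    have := sum_le_sum fun t (_ : t ∈ range n) =>
      choose_add_choose_le_add_choose a b t.add_one_ne_zero
    rw [sum_add_distrib] at this
    omega

theorem add_sum_range_choose_le_sum_range_choose_add (c i : ℕ) {n : ℕ} (hn : 2 ≤ n) :
    i + ∑ t ∈ range n, c.choose t ≤ ∑ t ∈ range n, (c + i).choose t := by
  obtain ⟨n, rfl⟩ := exists_add_of_le hn
  simp only [add_comm 2 n, sum_range_succ', zero_add, choose_one_right, choose_zero_right]
  have := sum_le_sum fun t (_ : t ∈ range n) => choose_le_add c i (t + 1 + 1)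
  omega

end Nat

theorem le_mul_add_sub_mul_add {i p r A B S : ℕ} (hBA : i + B ≤ A) (hS : B + S ≤ 1 + A)
    (hr : r < p) : i ≤ p * A + r - (p * B + r * S) := by
  obtain ⟨D, rfl⟩ := exists_add_of_le (le_of_add_le_right hBA)
  have hrS : r * S ≤ r * (1 + D) := Nat.mul_le_mul_left r (by omega)
  have hpD : (r + 1) * D ≤ p * D := Nat.mul_le_mul_right D hr
  apply Nat.le_sub_of_add_le
  nlinarith

theorem d_zero_sub_d_i_ge_i_general (n k i q r : ℕ)
    (hn : 2 ≤ n) (hi : i ≤ k - 1) (hr : r < 2 ^ q) :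
    i ≤ (2 ^ q * ∑ t ∈ Finset.range n, Nat.choose (k - 1) t
          + r * ∑ t ∈ Finset.range n, Nat.choose 0 t)
        - (2 ^ q * ∑ t ∈ Finset.range n, Nat.choose (k - i - 1) t
          + r * ∑ t ∈ Finset.range n, Nat.choose i t) := by
  have hk : k - 1 = (k - i - 1) + i := by omega
  rw [Nat.sum_range_choose_zero (by omega), mul_one, hk]
  exact le_mul_add_sub_mul_add (Nat.add_sum_range_choose_le_sum_range_choose_add _ i hn)
    (Nat.sum_range_choose_add_sum_range_choose_le _ i n) hr

theorem d_zero_sub_d_i_ge_i (n k i q r : ℕ)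
    (hn : 2 ≤ n) (hnk : n ≤ k) (hi : i ≤ k - 1) (hq : 0 < q) (hr : r < 2 ^ q) :
    i ≤ (2 ^ q * ∑ t ∈ Finset.range n, Nat.choose (k - 1) t
          + r * ∑ t ∈ Finset.range n, Nat.choose 0 t)
        - (2 ^ q * ∑ t ∈ Finset.range n, Nat.choose (k - i - 1) t
          + r * ∑ t ∈ Finset.range n, Nat.choose i t) :=
  d_zero_sub_d_i_ge_i_general n k i q r hn hi hr
end

section
/- Let 2 ≤ n ≤ k and 0 ≤ i ≤ k-1. Then β_n(k) + 1 ≥ β_n(k-i) + β_n(i+1), where β_n(j) = Σ_{t=0}^{n-1} C(j-1,t). -/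
/-! By Vandermonde, `C(a + b, t) ≥ C(a, t) + C(b, t)` for `t ≥ 1` (keep only the terms `(t, 0)` and `(0, t)`
of the convolution). Summed over `t < n` this loses only at `t = 0`, by `1`; take `a = k - i - 1`, `b = i`. -/

open Finset

theorem Nat.choose_add_choose_le_add_choose_s4 (a b : ℕ) {t : ℕ} (ht : t ≠ 0) :
    a.choose t + b.choose t ≤ (a + b).choose t := by
  have hne : ((t, 0) : ℕ × ℕ) ≠ (0, t) := by simp [ht]
  calc a.choose t + b.choose t
      = ∑ p ∈ {(t, 0), (0, t)}, a.choose p.1 * b.choose p.2 := by simp [sum_pair hne]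
    _ ≤ ∑ p ∈ antidiagonal t, a.choose p.1 * b.choose p.2 :=
        sum_le_sum_of_subset (by simp [insert_subset_iff])
    _ = (a + b).choose t := (Nat.add_choose_eq a b t).symm

theorem Nat.sum_range_choose_add_sum_range_choose_le_s4 (a b n : ℕ) :
    ∑ t ∈ range n, a.choose t + ∑ t ∈ range n, b.choose t
      ≤ ∑ t ∈ range n, (a + b).choose t + 1 := by
  cases n with
  | zero => simp
  | succ n =>
    simp only [sum_range_succ', choose_zero_right]
    have hpos := sum_le_sum fun t (_ : t ∈ range n) =>
      Nat.choose_add_choose_le_add_choose_s4 a b t.add_one_ne_zero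
    rw [sum_add_distrib] at hpos
    omega

theorem beta_superadditive_general (n k i : ℕ) (hi : i ≤ k - 1) :
    (∑ t ∈ Finset.range n, Nat.choose (k - i - 1) t)
      + (∑ t ∈ Finset.range n, Nat.choose i t)
    ≤ (∑ t ∈ Finset.range n, Nat.choose (k - 1) t) + 1 := by
  have hk : k - i - 1 + i = k - 1 := by omega
  simpa only [hk] using Nat.sum_range_choose_add_sum_range_choose_le_s4 (k - i - 1) i n

theorem beta_superadditive (n k i : ℕ) (hn : 2 ≤ n) (hnk : n ≤ k) (hi : i ≤ k - 1) :
    (∑ t ∈ Finset.range n, Nat.choose (k - i - 1) t)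
      + (∑ t ∈ Finset.range n, Nat.choose i t)
    ≤ (∑ t ∈ Finset.range n, Nat.choose (k - 1) t) + 1 :=
  beta_superadditive_general n k i hi
end

section
/- Over the field F_2, for k ≥ 1 the polynomial P_{k,k}(a_1,...,a_k) := Π_{∅ ≠ S ⊆ {1,...,k}} (Σ_{i∈S} a_i) equals Σ_{σ ∈ S_k} a_{σ(1)}^{2^{k-1}} a_{σ(2)}^{2^{k-2}} ··· a_{σ(k)}^{1}, the sum over all permutations σ of {1,...,k}. -/
/-!
In characteristic two the right-hand side is the Moore determinant `det (a_i ^ 2 ^ (k - 1 - j))`.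
It vanishes as soon as some nonempty sum `∑_{i ∈ S} a_i` does, because the Frobenius is additive
and so the rows indexed by `S` add up to zero. Hence each of the pairwise distinct prime linear
forms divides it, and so does their product. Both sides are homogeneous of degree `2 ^ k - 1` and
the right-hand side is nonzero (the monomial `a_1 ^ 2 ^ (k - 1) ⋯ a_k` occurs only for `σ = 1`),
so the quotient is a nonzero constant of `𝔽₂`, that is `1`.
-/

open MvPolynomial Finset Equiv

noncomputable def mooreSum {R : Type*} [CommSemiring R] {k : ℕ} (v : Fin k → R) : R :=
  ∑ σ : Perm (Fin k), ∏ i : Fin k, v (σ i) ^ 2 ^ (k - 1 - (i : ℕ))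

lemma Fin.sum_two_pow_rev (k : ℕ) : ∑ i : Fin k, 2 ^ (k - 1 - (i : ℕ)) = 2 ^ k - 1 := by
  rw [Fin.sum_univ_eq_sum_range (fun i => 2 ^ (k - 1 - i)), sum_range_reflect (2 ^ ·),
    Nat.geomSum_eq le_rfl, Nat.div_one]

lemma Finset.card_powerset_filter_ne_empty {α : Type*} [DecidableEq α] (s : Finset α) :
    #(s.powerset.filter (· ≠ ∅)) = 2 ^ #s - 1 := by
  rw [filter_ne', card_erase_of_mem (empty_mem_powerset s), card_powerset]

lemma CharTwo.units_int_smul_eq_self {R : Type*} [Ring R] [CharP R 2] (ε : ℤˣ) (x : R) :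
    ε • x = x := by
  rcases Int.units_eq_one_or ε with rfl | rfl <;> simp [CharTwo.neg_eq]

section Moore

variable {R : Type*} [CommRing R] {k : ℕ}

lemma map_mooreSum {S : Type*} [CommRing S] (f : R →+* S) (v : Fin k → R) :
    f (mooreSum v) = mooreSum (f ∘ v) := by
  simp [mooreSum, map_sum, map_prod, map_pow]

lemma mooreSum_eq_det [CharP R 2] (v : Fin k → R) :
    mooreSum v = (Matrix.of fun i j : Fin k => v i ^ 2 ^ (k - 1 - (j : ℕ))).det := by
  simp [mooreSum, Matrix.det_apply, CharTwo.units_int_smul_eq_self]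

lemma mooreSum_eq_zero [IsDomain R] [CharP R 2] {v : Fin k → R} {s : Finset (Fin k)}
    (hs : s.Nonempty) (h : ∑ i ∈ s, v i = 0) : mooreSum v = 0 := by
  classical
  have := Fact.mk Nat.prime_two
  rw [mooreSum_eq_det, ← Matrix.exists_vecMul_eq_zero_iff]
  refine ⟨fun i => if i ∈ s then 1 else 0, fun h0 => ?_, ?_⟩
  · obtain ⟨i, hi⟩ := hs
    simpa [hi] using congr_fun h0 i
  · ext j
    simp [Matrix.vecMul, dotProduct, ← sum_pow_char_pow, h]

lemma dvd_mooreSum [CharP R 2] {v : Fin k → R} {s : Finset (Fin k)}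
    (hp : Prime (∑ i ∈ s, v i)) : ∑ i ∈ s, v i ∣ mooreSum v := by
  set I := Ideal.span {∑ i ∈ s, v i}
  have : I.IsPrime := (Ideal.span_singleton_prime hp.ne_zero).mpr hp
  have : CharP (R ⧸ I) 2 := (CharP.charP_iff_prime_eq_zero Nat.prime_two).mpr <| by
    rw [← map_natCast (Ideal.Quotient.mk I), CharP.cast_eq_zero, map_zero]
  rw [← Ideal.mem_span_singleton, ← Ideal.Quotient.eq_zero_iff_mem, map_mooreSum]
  refine mooreSum_eq_zero (nonempty_of_sum_ne_zero hp.ne_zero) ?_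
  simp [← map_sum]

end Moore

namespace MvPolynomial

variable {σ R : Type*}

lemma subsingleton_units [CommRing R] [IsReduced R] [Subsingleton Rˣ] :
    Subsingleton (MvPolynomial σ R)ˣ := by
  have h (u : (MvPolynomial σ R)ˣ) : (u : MvPolynomial σ R) = 1 := by
    obtain ⟨r, hr, hu⟩ := isUnit_iff_eq_C_of_isReduced.mp u.isUnit
    rw [hu, isUnit_iff_eq_one.mp hr, C_1]
  exact ⟨fun u v => Units.ext ((h u).trans (h v).symm)⟩

lemma IsHomogeneous.exists_eq_C_mul_of_dvd [CommRing R] [IsDomain R] {p q : MvPolynomial σ R}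
    {n : ℕ} (hp : p.IsHomogeneous n) (hq : q.IsHomogeneous n) (hq0 : q ≠ 0) (hpq : p ∣ q) :
    ∃ c, q = C c * p := by
  obtain ⟨r, rfl⟩ := hpq
  obtain ⟨hp0, hr0⟩ := mul_ne_zero_iff.mp hq0
  have hdeg := totalDegree_mul_of_isDomain hp0 hr0
  rw [hq.totalDegree hq0, hp.totalDegree hp0] at hdeg
  exact ⟨coeff 0 r, by rw [← totalDegree_eq_zero_iff_eq_C.mp (by omega), mul_comm]⟩

lemma coeff_single_sum_X [CommSemiring R] [DecidableEq σ] (s : Finset σ) (i : σ) :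
    coeff (Finsupp.single i 1) (∑ j ∈ s, X j : MvPolynomial σ R) = if i ∈ s then 1 else 0 := by
  simp [coeff_sum, coeff_X, Finsupp.single_left_inj one_ne_zero]

lemma sum_X_injective [CommSemiring R] [Nontrivial R] :
    Function.Injective fun s : Finset σ => (∑ i ∈ s, X i : MvPolynomial σ R) := by
  classical
  intro s t h
  ext i
  have hi := congr_arg (coeff (Finsupp.single i 1)) h
  simp only [coeff_single_sum_X] at hi
  split_ifs at hi <;> simp_all

lemma isHomogeneous_sum_X [CommSemiring R] (s : Finset σ) :
    (∑ i ∈ s, X i : MvPolynomial σ R).IsHomogeneous 1 :=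
  IsHomogeneous.sum _ _ _ fun i _ => isHomogeneous_X R i

lemma prime_sum_X [Field R] {s : Finset σ} (hs : s.Nonempty) :
    Prime (∑ i ∈ s, X i : MvPolynomial σ R) := by
  classical
  obtain ⟨i, hi⟩ := hs
  have hcoeff := coeff_single_sum_X (R := R) s i
  rw [if_pos hi] at hcoeff
  refine (irreducible_of_totalDegree_eq_one ((isHomogeneous_sum_X s).totalDegree ?_)
    fun x hx => isUnit_of_dvd_one (hcoeff ▸ hx _)).prime
  exact fun h0 => one_ne_zero (hcoeff.symm.trans (by rw [h0, coeff_zero]))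

lemma prod_X_pow_perm [CommSemiring R] [Fintype σ] (π : Perm σ) (e : σ → ℕ) :
    ∏ i, (X (π i) : MvPolynomial σ R) ^ e i
      = monomial (Finsupp.equivFunOnFinite.symm (e ∘ ⇑π⁻¹)) 1 := by
  rw [monomial_eq, C_1, one_mul, Finsupp.prod_fintype _ _ (fun _ => pow_zero _)]
  exact Fintype.prod_equiv π _ _ fun i => by simp

lemma isHomogeneous_mooreSum_X [CommSemiring R] (k : ℕ) :
    (mooreSum X : MvPolynomial (Fin k) R).IsHomogeneous (2 ^ k - 1) := by
  refine IsHomogeneous.sum _ _ _ fun π _ => ?_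
  rw [← Fin.sum_two_pow_rev]
  exact IsHomogeneous.prod _ _ _ fun i _ => isHomogeneous_X_pow _ _

lemma coeff_mooreSum_X [CommSemiring R] (k : ℕ) :
    coeff (Finsupp.equivFunOnFinite.symm fun j : Fin k => 2 ^ (k - 1 - (j : ℕ)))
      (mooreSum X : MvPolynomial (Fin k) R) = 1 := by
  classical
  have hexp (π : Perm (Fin k)) (h : (fun j : Fin k => 2 ^ (k - 1 - (π⁻¹ j : ℕ)))
      = fun j : Fin k => 2 ^ (k - 1 - (j : ℕ))) : π = 1 := by
    have hinv (j : Fin k) : π⁻¹ j = j := by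
      have := Nat.pow_right_injective le_rfl (congr_fun h j)
      have := (π⁻¹ j).isLt
      have := j.isLt
      exact Fin.ext (by omega)
    exact Equiv.ext fun j => by simpa using (hinv (π j)).symm
  simp only [mooreSum, prod_X_pow_perm, coeff_sum, coeff_monomial]
  rw [sum_eq_single 1]
  · simp
  · intro π _ hπ
    rw [if_neg]
    exact fun h => hπ (hexp π (Finsupp.equivFunOnFinite.symm.injective h))
  · simp

lemma mooreSum_X_ne_zero [CommSemiring R] [Nontrivial R] (k : ℕ) :
    (mooreSum X : MvPolynomial (Fin k) R) ≠ 0 := fun h =>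
  one_ne_zero ((coeff_mooreSum_X (R := R) k).symm.trans (by rw [h, coeff_zero]))

lemma isHomogeneous_prod_sum_X [CommSemiring R] (t : Finset (Finset σ)) :
    (∏ s ∈ t, ∑ i ∈ s, X i : MvPolynomial σ R).IsHomogeneous #t := by
  simpa using IsHomogeneous.prod t _ (fun _ => 1) fun s _ => isHomogeneous_sum_X s

lemma prod_sum_X_dvd_mooreSum (k : ℕ) :
    ∏ s ∈ univ.powerset.filter (· ≠ ∅), (∑ i ∈ s, X i : MvPolynomial (Fin k) (ZMod 2))
      ∣ mooreSum X := by
  have := subsingleton_units (σ := Fin k) (R := ZMod 2)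
  refine (dvd_of_eq (prod_image (f := id) sum_X_injective.injOn).symm).trans
    (prod_primes_dvd _ ?_ ?_) <;>
    simp only [forall_mem_image, mem_filter, ← nonempty_iff_ne_empty]
  · exact fun s ⟨_, hs⟩ => prime_sum_X hs
  · exact fun s ⟨_, hs⟩ => dvd_mooreSum (prime_sum_X hs)

end MvPolynomial

theorem P_kk_formula_general (k : ℕ) :
    ∏ S ∈ Finset.univ.powerset.filter (fun S : Finset (Fin k) => S ≠ ∅),
        (∑ i ∈ S, (X i : MvPolynomial (Fin k) (ZMod 2)))
    = ∑ σ : Equiv.Perm (Fin k), ∏ i : Fin k, (X (σ i) : MvPolynomial (Fin k) (ZMod 2)) ^ (2 ^ (k - 1 - (i : ℕ))) := by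
  have hdeg := isHomogeneous_prod_sum_X (R := ZMod 2)
    (univ.powerset.filter fun S : Finset (Fin k) => S ≠ ∅)
  rw [card_powerset_filter_ne_empty, card_univ, Fintype.card_fin] at hdeg
  obtain ⟨c, hc⟩ := hdeg.exists_eq_C_mul_of_dvd (isHomogeneous_mooreSum_X k)
    (mooreSum_X_ne_zero k) (prod_sum_X_dvd_mooreSum k)
  have hc0 : c ≠ 0 := by
    rintro rfl
    exact mooreSum_X_ne_zero k (by simpa using hc)
  have hc1 : c = 1 := (by decide : ∀ c : ZMod 2, c ≠ 0 → c = 1) c hc0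
  change _ = mooreSum X
  rw [hc, hc1, C_1, one_mul]

theorem P_kk_formula (k : ℕ) (hk : 1 ≤ k) :
    ∏ S ∈ Finset.univ.powerset.filter (fun S : Finset (Fin k) => S ≠ ∅),
        (∑ i ∈ S, (X i : MvPolynomial (Fin k) (ZMod 2)))
    = ∑ σ : Equiv.Perm (Fin k), ∏ i : Fin k, (X (σ i) : MvPolynomial (Fin k) (ZMod 2)) ^ (2 ^ (k - 1 - (i : ℕ))) :=
  P_kk_formula_general k
end

section
/- Let 2 ≤ n ≤ k, m = 2^q + r with q ≥ 1 and 0 ≤ r < 2^q, and d* = 2^q·β_n(k) + r. Then the monomial p* = (a_1^{β_n(k)} a_2^{β_n(k-1)} ··· a_k^{β_n(1)})^{2^q} · (a_1^{β_n(1)} a_2^{β_n(2)} ··· a_k^{β_n(k)})^r is nonzero in F_2[a_1,...,a_k]/(a_1^{d*+1}, a_2^{d*}, ..., a_k^{d*-k+2}), i.e. the exponent of a_{i+1} in p* is at most d* - i for 0 ≤ i ≤ k-1. -/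
/-!
A monomial whose exponents are all below the `b_i` survives modulo the monomial ideal
`(X_i ^ b_i)`, so everything reduces to the exponent bound `d_i + i ≤ d*`. It follows from
the superadditivity `C(a,t) + C(b,t) ≤ C(a+b,t)` for `t ≥ 1` (the `t = 0` terms account for
the `+ r`) and from the `t = 1` terms, which alone already account for the `+ i`.
-/

open MvPolynomial

section MonomialQuotient

variable {σ R : Type*} [CommSemiring R] [Nontrivial R]

theorem monomial_one_notMem_span_X_pow (b : σ → ℕ) {s : σ →₀ ℕ} (hs : ∀ i, s i < b i) :
    monomial s (1 : R) ∉ Ideal.span (Set.range fun i => (X i : MvPolynomial σ R) ^ b i) := by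
  have hspan : Set.range (fun i => (X i : MvPolynomial σ R) ^ b i) =
      (fun s => monomial s (1 : R)) '' Set.range fun i => Finsupp.single i (b i) := by
    rw [← Set.range_comp]
    simp only [Function.comp_def, X_pow_eq_monomial]
  classical
  rw [hspan, mem_ideal_span_monomial_image, support_monomial, if_neg one_ne_zero]
  simp only [Finset.mem_singleton, forall_eq, Set.mem_range, exists_exists_eq_and,
    Finsupp.single_le_iff, not_exists, not_le]
  exact hs

theorem prod_X_pow_notMem_span_X_pow [Fintype σ] (b e : σ → ℕ) (he : ∀ i, e i < b i) :
    ∏ i, (X i : MvPolynomial σ R) ^ e i ∉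
      Ideal.span (Set.range fun i => (X i : MvPolynomial σ R) ^ b i) := by
  have hmono : ∏ i, (X i : MvPolynomial σ R) ^ e i =
      monomial (Finsupp.equivFunOnFinite.symm e) 1 := by
    rw [monomial_eq, C_1, one_mul, Finsupp.prod_fintype _ _ fun _ => pow_zero _]
    rfl
  rw [hmono]
  exact monomial_one_notMem_span_X_pow b he

end MonomialQuotient

namespace Nat

theorem choose_add_choose_le_choose_add (a b : ℕ) {t : ℕ} (ht : t ≠ 0) :
    a.choose t + b.choose t ≤ (a + b).choose t := by
  obtain ⟨s, rfl⟩ := exists_eq_add_one_of_ne_zero ht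
  induction b generalizing s with
  | zero => simp
  | succ b ih =>
    rw [← add_assoc, choose_succ_succ', choose_succ_succ']
    have := ih s (add_one_ne_zero s)
    have := choose_le_add b a s
    rw [add_comm b a] at this
    omega

end Nat

/-- The paper's `β_n(j + 1)`. -/
def binomialPartialSum (n j : ℕ) : ℕ := ∑ t ∈ Finset.range n, j.choose t

theorem binomialPartialSum_add_le (n a b : ℕ) :
    binomialPartialSum n a + binomialPartialSum n b ≤ binomialPartialSum n (a + b) + 1 := by
  cases n with
  | zero => simp [binomialPartialSum]
  | succ n =>
    simp only [binomialPartialSum, Finset.sum_range_succ', Nat.choose_zero_right]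
    have := Finset.sum_le_sum fun t (_ : t ∈ Finset.range n) =>
      Nat.choose_add_choose_le_choose_add a b (Nat.add_one_ne_zero t)
    rw [Finset.sum_add_distrib] at this
    omega

theorem binomialPartialSum_add_le_add (n a b : ℕ) (hn : 2 ≤ n) :
    binomialPartialSum n a + b ≤ binomialPartialSum n (a + b) := by
  obtain ⟨n, rfl⟩ := Nat.exists_eq_add_of_le' hn
  simp only [binomialPartialSum, Finset.sum_range_succ', Nat.choose_zero_right, zero_add,
    Nat.choose_one_right]
  have := Finset.sum_le_sum fun t (_ : t ∈ Finset.range n) =>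
    Nat.choose_le_add a b (t + 1 + 1)
  omega

/-- With `P = 2 ^ q`, `a = k - i - 1` and `b = i` this is `d_i ≤ d* - i`. -/
theorem mul_binomialPartialSum_add_le {P r : ℕ} (n a b : ℕ) (hn : 2 ≤ n) (hr : r < P) :
    P * binomialPartialSum n a + r * binomialPartialSum n b + b ≤
      P * binomialPartialSum n (a + b) + r := by
  have h₁ := binomialPartialSum_add_le n a b
  have h₂ := binomialPartialSum_add_le_add n a b hn
  obtain ⟨s, rfl⟩ := Nat.exists_eq_add_of_lt hr
  -- split `P * β a` as `r * β a + (s + 1) * β a` and bound the two parts by `h₁` and `h₂`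
  nlinarith [Nat.mul_le_mul_left r h₁, Nat.mul_le_mul_left s h₂]

theorem p_star_ne_zero_general (k n q r d : ℕ) (hn : 2 ≤ n)
    (hr : r < 2 ^ q)
    (hd : d = 2 ^ q * (∑ t ∈ Finset.range n, Nat.choose (k - 1) t) + r) :
    Ideal.Quotient.mk
        (Ideal.span (Set.range fun i : Fin k =>
          (X i : MvPolynomial (Fin k) (ZMod 2)) ^ (d - (i : ℕ) + 1)))
        (∏ i : Fin k, (X i : MvPolynomial (Fin k) (ZMod 2)) ^
          (2 ^ q * (∑ t ∈ Finset.range n, Nat.choose (k - (i : ℕ) - 1) t)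
            + r * (∑ t ∈ Finset.range n, Nat.choose (i : ℕ) t))) ≠ 0 := by
  rw [Ne, Ideal.Quotient.eq_zero_iff_mem]
  refine prod_X_pow_notMem_span_X_pow _ _ fun i => ?_
  have hk : k - 1 = k - (i : ℕ) - 1 + i := by omega
  have hexp := mul_binomialPartialSum_add_le n (k - i - 1) i hn hr
  rw [← hk] at hexp
  simp only [binomialPartialSum] at hexp
  rw [← hd] at hexp
  omega

theorem p_star_ne_zero (k n q r m d : ℕ) (hn : 2 ≤ n) (hnk : n ≤ k)
    (hq : 1 ≤ q) (hr : r < 2 ^ q) (hm : m = 2 ^ q + r)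
    (hd : d = 2 ^ q * (∑ t ∈ Finset.range n, Nat.choose (k - 1) t) + r) :
    Ideal.Quotient.mk
        (Ideal.span (Set.range fun i : Fin k =>
          (X i : MvPolynomial (Fin k) (ZMod 2)) ^ (d - (i : ℕ) + 1)))
        (∏ i : Fin k, (X i : MvPolynomial (Fin k) (ZMod 2)) ^
          (2 ^ q * (∑ t ∈ Finset.range n, Nat.choose (k - (i : ℕ) - 1) t)
            + r * (∑ t ∈ Finset.range n, Nat.choose (i : ℕ) t))) ≠ 0 :=
  p_star_ne_zero_general k n q r d hn hr hd
end

section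
/- For every finite measure μ on R^2 vanishing on lines, there exist two perpendicular lines that divide the plane into four regions each of measure μ(R^2)/4 (the pancake theorem). -/
/-!
For every angle `θ` choose a line orthogonal to `dir θ` that bisects `μ`, and let `A θ` be the
mass of the quadrant bounded by the bisecting lines in the directions `θ` and `θ + π / 2`.
Turning by `π / 2` replaces this quadrant by its neighbour inside the same bisecting half-plane,
so `A θ + A (θ + π / 2) = μ univ / 2`, and the intermediate value theorem gives `A θ = μ univ / 4`;
the other three quadrants then have the same mass because each bisecting half-plane has mass
`μ univ / 2`. Bisecting lines of a given direction need not be unique, but any two of them bound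
a null strip, which is what makes `A` continuous although the choice of lines is not.
-/

open MeasureTheory Filter Set Topology
open scoped ENNReal RealInnerProductSpace

namespace Pancake

lemma div_four_add_div_four (a : ℝ≥0∞) : a / 4 + a / 4 = a / 2 := by
  rw [ENNReal.div_add_div_same, ← two_mul, show (4 : ℝ≥0∞) = 2 * 2 by norm_num,
    ENNReal.mul_div_mul_left _ _ two_ne_zero ENNReal.ofNat_ne_top]

section HalfSpace

variable {E : Type*} [NormedAddCommGroup E] [InnerProductSpace ℝ E]

def halfSpace (v : E) (c : ℝ) : Set E := {x | ⟪v, x⟫ ≤ c}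

lemma halfSpace_mono (v : E) {c c' : ℝ} (h : c ≤ c') : halfSpace v c ⊆ halfSpace v c' :=
  fun _ hx => hx.trans h

lemma halfSpace_neg_neg (v : E) (c : ℝ) : halfSpace (-v) (-c) = {x | c ≤ ⟪v, x⟫} := by
  ext x
  simp [halfSpace, inner_neg_left]

lemma iInter_halfSpace (v : E) : ⋂ c, halfSpace v c = ∅ :=
  eq_empty_of_forall_notMem fun x hx =>
    absurd (mem_iInter.1 hx (⟪v, x⟫ - 1)) (by simp [halfSpace])

lemma iUnion_halfSpace (v : E) : ⋃ c, halfSpace v c = univ :=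
  eq_univ_of_forall fun x => mem_iUnion.2 ⟨⟪v, x⟫, le_refl ⟪v, x⟫⟩

lemma eventually_mem_halfSpace_iff {ι : Type*} {L : Filter ι} {v : E} {c : ℝ} {vs : ι → E}
    {cs : ι → ℝ} (hv : Tendsto vs L (𝓝 v)) (hc : Tendsto cs L (𝓝 c)) {x : E}
    (hx : ⟪v, x⟫ ≠ c) : ∀ᶠ i in L, x ∈ halfSpace (vs i) (cs i) ↔ x ∈ halfSpace v c := by
  have hvx : Tendsto (fun i => ⟪vs i, x⟫) L (𝓝 ⟪v, x⟫) := hv.inner tendsto_const_nhds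
  rcases hx.lt_or_gt with hlt | hgt
  · filter_upwards [hvx.eventually_lt hc hlt] with i hi
    simp [halfSpace, hi.le, hlt.le]
  · filter_upwards [hc.eventually_lt hvx hgt] with i hi
    simp [halfSpace, hi.not_ge, hgt.not_ge]

variable [MeasurableSpace E] (μ : Measure E)

lemma neg_halfSpace_ae_eq_compl {v : E} {c : ℝ} (hvc : μ {x | ⟪v, x⟫ = c} = 0) :
    halfSpace (-v) (-c) =ᵐ[μ] ((halfSpace v c)ᶜ : Set E) := by
  filter_upwards [measure_eq_zero_iff_ae_notMem.1 hvc] with x hx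
  rw [halfSpace_neg_neg]
  exact eq_iff_iff.2 ⟨fun h => not_le.2 (h.lt_of_ne' hx), fun h => le_of_not_ge h⟩

lemma tendsto_measure_halfSpace_atTop (v : E) :
    Tendsto (fun c => μ (halfSpace v c)) atTop (𝓝 (μ univ)) := by
  simpa only [Function.comp_def, iUnion_halfSpace] using
    tendsto_measure_iUnion_atTop (μ := μ) (fun _ _ h => halfSpace_mono v h)

lemma exists_half_lt_measure_halfSpace [IsFiniteMeasure μ] [NeZero μ] (v : E) :
    ∃ b, μ univ / 2 < μ (halfSpace v b) :=
  ((tendsto_measure_halfSpace_atTop μ v).eventually_const_lt <| ENNReal.half_lt_self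
    (Measure.measure_univ_ne_zero.2 (NeZero.ne μ)) (measure_ne_top μ _)).exists

def Bisects (v : E) (c : ℝ) : Prop := μ (halfSpace v c) = μ univ / 2

variable [OpensMeasurableSpace E]

lemma measurableSet_halfSpace (v : E) (c : ℝ) : MeasurableSet (halfSpace v c) :=
  measurableSet_le (continuous_const.inner continuous_id).measurable measurable_const

lemma measure_inter_halfSpace_add_inter_neg {v : E} {c : ℝ} (hvc : μ {x | ⟪v, x⟫ = c} = 0)
    (S : Set E) : μ (S ∩ halfSpace v c) + μ (S ∩ halfSpace (-v) (-c)) = μ S := by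
  rw [measure_congr ((EventuallyEq.refl _ S).inter (neg_halfSpace_ae_eq_compl μ hvc))]
  exact measure_inter_add_sdiff S (measurableSet_halfSpace v c)

variable [IsFiniteMeasure μ]

lemma tendsto_measure_halfSpace_inter {ι : Type*} {L : Filter ι} [L.IsCountablyGenerated]
    {v w : E} {c d : ℝ} (hvc : μ {x | ⟪v, x⟫ = c} = 0) (hwd : μ {x | ⟪w, x⟫ = d} = 0)
    {vs ws : ι → E} {cs ds : ι → ℝ} (hv : Tendsto vs L (𝓝 v)) (hc : Tendsto cs L (𝓝 c))
    (hw : Tendsto ws L (𝓝 w)) (hd : Tendsto ds L (𝓝 d)) :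
    Tendsto (fun i => μ (halfSpace (vs i) (cs i) ∩ halfSpace (ws i) (ds i))) L
      (𝓝 (μ (halfSpace v c ∩ halfSpace w d))) := by
  refine tendsto_measure_of_ae_tendsto_indicator_of_isFiniteMeasure L
    ((measurableSet_halfSpace v c).inter (measurableSet_halfSpace w d))
    (fun i => (measurableSet_halfSpace _ _).inter (measurableSet_halfSpace _ _)) ?_
  filter_upwards [measure_eq_zero_iff_ae_notMem.1 hvc, measure_eq_zero_iff_ae_notMem.1 hwd]
    with x hx₁ hx₂
  filter_upwards [eventually_mem_halfSpace_iff hv hc hx₁, eventually_mem_halfSpace_iff hw hd hx₂]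
    with i h₁ h₂
  exact and_congr h₁ h₂

lemma tendsto_measure_halfSpace {ι : Type*} {L : Filter ι} [L.IsCountablyGenerated]
    {v : E} {c : ℝ} (hvc : μ {x | ⟪v, x⟫ = c} = 0) {vs : ι → E} {cs : ι → ℝ}
    (hv : Tendsto vs L (𝓝 v)) (hc : Tendsto cs L (𝓝 c)) :
    Tendsto (fun i => μ (halfSpace (vs i) (cs i))) L (𝓝 (μ (halfSpace v c))) := by
  simpa only [inter_self] using tendsto_measure_halfSpace_inter μ hvc hvc hv hc hv hc

lemma tendsto_measure_halfSpace_atBot (v : E) :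
    Tendsto (fun c => μ (halfSpace v c)) atBot (𝓝 0) := by
  simpa only [Function.comp_def, iInter_halfSpace, measure_empty] using
    tendsto_measure_iInter_atBot (fun c => (measurableSet_halfSpace v c).nullMeasurableSet)
      (fun _ _ h => halfSpace_mono v h) ⟨0, measure_ne_top μ _⟩

lemma continuous_measure_halfSpace {v : E} (hv : ∀ c, μ {x | ⟪v, x⟫ = c} = 0) :
    Continuous fun c => μ (halfSpace v c) :=
  continuous_iff_continuousAt.2 fun c =>
    tendsto_measure_halfSpace μ (hv c) tendsto_const_nhds tendsto_id

variable {μ} in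
lemma Bisects.ae_eq {v : E} {c c' : ℝ} (hc : Bisects μ v c) (hc' : Bisects μ v c') :
    halfSpace v c =ᵐ[μ] halfSpace v c' := by
  have key : ∀ {a b}, a ≤ b → Bisects μ v a → Bisects μ v b →
      halfSpace v a =ᵐ[μ] halfSpace v b := fun hab ha hb =>
    ae_eq_of_subset_of_measure_ge (halfSpace_mono v hab) (hb.trans ha.symm).le
      (measurableSet_halfSpace v _).nullMeasurableSet (measure_ne_top μ _)
  rcases le_total c c' with h | h
  · exact key h hc hc'
  · exact (key h hc' hc).symm

variable {μ} in
lemma Bisects.neg {v : E} {c : ℝ} (hvc : μ {x | ⟪v, x⟫ = c} = 0) (h : Bisects μ v c) :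
    Bisects μ (-v) (-c) := by
  rw [Bisects, measure_congr (neg_halfSpace_ae_eq_compl μ hvc),
    measure_compl (measurableSet_halfSpace v c) (measure_ne_top μ _), h,
    ENNReal.sub_half (measure_ne_top μ _)]

variable {μ} in
lemma Bisects.of_tendsto {ι : Type*} {L : Filter ι} [L.IsCountablyGenerated] [L.NeBot]
    {v : E} {c : ℝ} (hvc : μ {x | ⟪v, x⟫ = c} = 0) {vs : ι → E} {cs : ι → ℝ}
    (hv : Tendsto vs L (𝓝 v)) (hc : Tendsto cs L (𝓝 c))
    (h : ∀ᶠ i in L, Bisects μ (vs i) (cs i)) : Bisects μ v c :=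
  tendsto_nhds_unique (tendsto_measure_halfSpace μ hvc hv hc)
    (tendsto_const_nhds.congr' (h.mono fun _ hi => hi.symm))

lemma measure_quadrants_eq {v w : E} {c₁ c₂ : ℝ} (hv : μ {x | ⟪v, x⟫ = c₁} = 0)
    (hw : μ {x | ⟪w, x⟫ = c₂} = 0) (h₁ : Bisects μ v c₁) (h₂ : Bisects μ w c₂)
    (h : μ (halfSpace v c₁ ∩ halfSpace w c₂) = μ univ / 4) :
    μ {x | ⟪v, x⟫ ≤ c₁ ∧ ⟪w, x⟫ ≤ c₂} = μ univ / 4 ∧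
      μ {x | ⟪v, x⟫ ≤ c₁ ∧ c₂ ≤ ⟪w, x⟫} = μ univ / 4 ∧
      μ {x | c₁ ≤ ⟪v, x⟫ ∧ ⟪w, x⟫ ≤ c₂} = μ univ / 4 ∧
      μ {x | c₁ ≤ ⟪v, x⟫ ∧ c₂ ≤ ⟪w, x⟫} = μ univ / 4 := by
  have hq : μ univ / 4 ≠ ∞ := by finiteness
  have cancel : ∀ {a b : ℝ≥0∞}, a = μ univ / 4 → a + b = μ univ / 2 → b = μ univ / 4 :=
    fun ha hab => (ENNReal.add_right_inj hq).1 (by rw [div_four_add_div_four, ← hab, ha])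
  have hlr : μ (halfSpace v c₁ ∩ halfSpace (-w) (-c₂)) = μ univ / 4 :=
    cancel h ((measure_inter_halfSpace_add_inter_neg μ hw _).trans h₁)
  have hrl : μ (halfSpace w c₂ ∩ halfSpace (-v) (-c₁)) = μ univ / 4 :=
    cancel (by rwa [inter_comm]) ((measure_inter_halfSpace_add_inter_neg μ hv _).trans h₂)
  have hrr : μ (halfSpace (-v) (-c₁) ∩ halfSpace (-w) (-c₂)) = μ univ / 4 :=
    cancel (by rwa [inter_comm])
      ((measure_inter_halfSpace_add_inter_neg μ hw _).trans (h₁.neg hv))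
  simp only [halfSpace_neg_neg] at hlr hrl hrr
  exact ⟨h, hlr, by rwa [inter_comm] at hrl, hrr⟩

variable [NeZero μ]

lemma exists_measure_halfSpace_lt_half (v : E) : ∃ a, μ (halfSpace v a) < μ univ / 2 :=
  ((tendsto_measure_halfSpace_atBot μ v).eventually_lt_const
    (ENNReal.half_pos (Measure.measure_univ_ne_zero.2 (NeZero.ne μ)))).exists

lemma exists_bisects {v : E} (hv : ∀ c, μ {x | ⟪v, x⟫ = c} = 0) : ∃ c, Bisects μ v c :=
  let ⟨a, ha⟩ := exists_measure_halfSpace_lt_half μ v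
  let ⟨b, hb⟩ := exists_half_lt_measure_halfSpace μ v
  mem_range_of_exists_le_of_exists_ge (continuous_measure_halfSpace μ hv) ⟨a, ha.le⟩ ⟨b, hb.le⟩

lemma exists_eventually_mem_Icc_of_bisects {ι : Type*} {L : Filter ι} [L.IsCountablyGenerated]
    {v : E} (hv : ∀ c, μ {x | ⟪v, x⟫ = c} = 0) {vs : ι → E} {cs : ι → ℝ}
    (hvs : Tendsto vs L (𝓝 v))
    (h : ∀ᶠ i in L, Bisects μ (vs i) (cs i)) : ∃ a b, ∀ᶠ i in L, cs i ∈ Icc a b := by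
  obtain ⟨a, ha⟩ := exists_measure_halfSpace_lt_half μ v
  obtain ⟨b, hb⟩ := exists_half_lt_measure_halfSpace μ v
  refine ⟨a, b, ?_⟩
  filter_upwards [h,
    (tendsto_measure_halfSpace μ (hv a) hvs tendsto_const_nhds).eventually_lt_const ha,
    (tendsto_measure_halfSpace μ (hv b) hvs tendsto_const_nhds).eventually_const_lt hb]
    with i hi hia hib
  constructor
  · by_contra! hlt
    have : μ (halfSpace (vs i) (cs i)) ≤ μ (halfSpace (vs i) a) :=
      measure_mono (halfSpace_mono _ hlt.le)
    exact (hi ▸ this).not_gt hia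
  · by_contra! hlt
    have : μ (halfSpace (vs i) b) ≤ μ (halfSpace (vs i) (cs i)) :=
      measure_mono (halfSpace_mono _ hlt.le)
    exact (hi ▸ this).not_gt hib

lemma tendsto_measure_inter_of_bisects {v w : E} (hv : ∀ c, μ {x | ⟪v, x⟫ = c} = 0)
    (hw : ∀ d, μ {x | ⟪w, x⟫ = d} = 0) {vs ws : ℕ → E} {cs ds : ℕ → ℝ} {c d : ℝ}
    (hvs : Tendsto vs atTop (𝓝 v)) (hws : Tendsto ws atTop (𝓝 w))
    (hcs : ∀ n, Bisects μ (vs n) (cs n)) (hds : ∀ n, Bisects μ (ws n) (ds n))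
    (hc : Bisects μ v c) (hd : Bisects μ w d) :
    Tendsto (fun n => μ (halfSpace (vs n) (cs n) ∩ halfSpace (ws n) (ds n))) atTop
      (𝓝 (μ (halfSpace v c ∩ halfSpace w d))) := by
  -- The offsets need not converge, but each of their limit points again bisects `μ`.
  refine tendsto_of_subseq_tendsto fun ns hns => ?_
  obtain ⟨a₁, b₁, h₁⟩ := exists_eventually_mem_Icc_of_bisects μ hv (hvs.comp hns)
    (.of_forall fun n => hcs (ns n))
  obtain ⟨a₂, b₂, h₂⟩ := exists_eventually_mem_Icc_of_bisects μ hw (hws.comp hns)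
    (.of_forall fun n => hds (ns n))
  obtain ⟨p, -, φ, hφ, hp⟩ := tendsto_subseq_of_frequently_bounded
    ((Metric.isBounded_Icc a₁ b₁).prod (Metric.isBounded_Icc a₂ b₂))
    (x := fun n => (cs (ns n), ds (ns n))) (h₁.and h₂).frequently
  have hψ : Tendsto (ns ∘ φ) atTop atTop := hns.comp hφ.tendsto_atTop
  have hv' := hvs.comp hψ
  have hw' := hws.comp hψ
  have hc' : Tendsto (cs ∘ ns ∘ φ) atTop (𝓝 p.1) := (continuous_fst.tendsto p).comp hp
  have hd' : Tendsto (ds ∘ ns ∘ φ) atTop (𝓝 p.2) := (continuous_snd.tendsto p).comp hp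
  have hp₁ : Bisects μ v p.1 := .of_tendsto (hv _) hv' hc' (.of_forall fun _ => hcs _)
  have hp₂ : Bisects μ w p.2 := .of_tendsto (hw _) hw' hd' (.of_forall fun _ => hds _)
  refine ⟨φ, ?_⟩
  rw [measure_congr ((hc.ae_eq hp₁).inter (hd.ae_eq hp₂))]
  exact tendsto_measure_halfSpace_inter μ (hv _) (hw _) hv' hc' hw' hd'

end HalfSpace

lemma exists_eq_of_add_eq_add_self {X : Type*} [TopologicalSpace X] [PreconnectedSpace X]
    {f : X → ℝ≥0∞} (hf : Continuous f) {a b : X} {q : ℝ≥0∞} (hq : q ≠ ∞)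
    (h : f a + f b = q + q) : ∃ x, f x = q := by
  rcases le_total (f a) q with ha | ha
  · refine mem_range_of_exists_le_of_exists_ge hf ⟨a, ha⟩ ⟨b, not_lt.1 fun hb => ?_⟩
    exact (ENNReal.add_lt_add_of_le_of_lt (ne_top_of_le_ne_top hq ha) ha hb).ne h
  · refine mem_range_of_exists_le_of_exists_ge hf ⟨b, not_lt.1 fun hb => ?_⟩ ⟨a, ha⟩
    exact (ENNReal.add_lt_add_of_le_of_lt hq ha hb).ne' h

open Real

noncomputable def dir (θ : ℝ) : EuclideanSpace ℝ (Fin 2) := !₂[cos θ, sin θ]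

lemma dir_ne_zero (θ : ℝ) : dir θ ≠ 0 := by
  intro h
  have h0 := congrArg (· 0) h
  have h1 := congrArg (· 1) h
  simp [dir] at h0 h1
  simpa [h0, h1] using sin_sq_add_cos_sq θ

lemma dir_add_pi (θ : ℝ) : dir (θ + π) = -dir θ := by
  ext i
  fin_cases i <;> simp [dir, cos_add_pi, sin_add_pi]

lemma inner_dir_dir_add_pi_div_two (θ : ℝ) : ⟪dir θ, dir (θ + π / 2)⟫ = 0 := by
  simp [dir, PiLp.inner_apply, Fin.sum_univ_two, cos_add_pi_div_two, sin_add_pi_div_two]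
  ring

lemma continuous_dir : Continuous dir := by
  unfold dir
  fun_prop

def quadrant (m : ℝ → ℝ) (θ : ℝ) : Set (EuclideanSpace ℝ (Fin 2)) :=
  halfSpace (dir θ) (m θ) ∩ halfSpace (dir (θ + π / 2)) (m (θ + π / 2))

variable (μ : Measure (EuclideanSpace ℝ (Fin 2))) [IsFiniteMeasure μ] {m : ℝ → ℝ}

lemma continuous_measure_quadrant [NeZero μ]
    (hμ : ∀ v : EuclideanSpace ℝ (Fin 2), v ≠ 0 → ∀ c : ℝ, μ {x | ⟪v, x⟫ = c} = 0)
    (hm : ∀ θ, Bisects μ (dir θ) (m θ)) : Continuous fun θ => μ (quadrant m θ) :=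
  continuous_iff_seqContinuous.2 fun {_ θ} hθ =>
    tendsto_measure_inter_of_bisects μ (hμ _ (dir_ne_zero θ)) (hμ _ (dir_ne_zero _))
      ((continuous_dir.tendsto θ).comp hθ)
      (((continuous_dir.comp (continuous_add_const _)).tendsto θ).comp hθ)
      (fun _ => hm _) (fun _ => hm _) (hm θ) (hm _)

lemma measure_quadrant_add_measure_quadrant_add_pi_div_two
    (hμ : ∀ v : EuclideanSpace ℝ (Fin 2), v ≠ 0 → ∀ c : ℝ, μ {x | ⟪v, x⟫ = c} = 0)
    (hm : ∀ θ, Bisects μ (dir θ) (m θ)) (θ : ℝ) :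
    μ (quadrant m θ) + μ (quadrant m (θ + π / 2)) = μ univ / 2 := by
  have hnull := hμ _ (dir_ne_zero θ)
  have hopp : halfSpace (-dir θ) (m (θ + π)) =ᵐ[μ] halfSpace (-dir θ) (-m θ) :=
    (dir_add_pi θ ▸ hm (θ + π)).ae_eq ((hm θ).neg (hnull _))
  rw [quadrant, quadrant, add_assoc θ, add_halves, dir_add_pi, inter_comm,
    measure_congr ((EventuallyEq.refl _ _).inter hopp),
    measure_inter_halfSpace_add_inter_neg μ (hnull _), hm]

end Pancake

open Pancake Real in
theorem pancake_theorem_general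
    (μ : Measure (EuclideanSpace ℝ (Fin 2))) [IsFiniteMeasure μ]
    (hvanish : ∀ v : EuclideanSpace ℝ (Fin 2), v ≠ 0 → ∀ c : ℝ,
      μ {x | (inner ℝ v x : ℝ) = c} = 0) :
    ∃ (v w : EuclideanSpace ℝ (Fin 2)) (c₁ c₂ : ℝ), v ≠ 0 ∧ w ≠ 0 ∧
      (inner ℝ v w : ℝ) = 0 ∧
      μ {x | (inner ℝ v x : ℝ) ≤ c₁ ∧ (inner ℝ w x : ℝ) ≤ c₂} = μ Set.univ / 4 ∧
      μ {x | (inner ℝ v x : ℝ) ≤ c₁ ∧ c₂ ≤ (inner ℝ w x : ℝ)} = μ Set.univ / 4 ∧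
      μ {x | c₁ ≤ (inner ℝ v x : ℝ) ∧ (inner ℝ w x : ℝ) ≤ c₂} = μ Set.univ / 4 ∧
      μ {x | c₁ ≤ (inner ℝ v x : ℝ) ∧ c₂ ≤ (inner ℝ w x : ℝ)} = μ Set.univ / 4 := by
  rcases eq_zero_or_neZero μ with rfl | _
  · exact ⟨dir 0, dir (π / 2), 0, 0, dir_ne_zero _, dir_ne_zero _,
      by simpa using inner_dir_dir_add_pi_div_two 0, by simp, by simp, by simp, by simp⟩
  choose m hm using fun θ => exists_bisects μ (hvanish (dir θ) (dir_ne_zero θ))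
  obtain ⟨θ, hθ⟩ := exists_eq_of_add_eq_add_self (continuous_measure_quadrant μ hvanish hm)
    (by finiteness) ((measure_quadrant_add_measure_quadrant_add_pi_div_two μ hvanish hm 0).trans
      (div_four_add_div_four _).symm)
  exact ⟨dir θ, dir (θ + π / 2), m θ, m (θ + π / 2), dir_ne_zero _, dir_ne_zero _,
    inner_dir_dir_add_pi_div_two θ, measure_quadrants_eq μ (hvanish _ (dir_ne_zero _) _)
      (hvanish _ (dir_ne_zero _) _) (hm θ) (hm _) hθ⟩

theorem pancake_theorem
    (μ : Measure (EuclideanSpace ℝ (Fin 2))) [IsFiniteMeasure μ]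
    (hpos : 0 < μ Set.univ)
    (hvanish : ∀ v : EuclideanSpace ℝ (Fin 2), v ≠ 0 → ∀ c : ℝ,
      μ {x | (inner ℝ v x : ℝ) = c} = 0) :
    ∃ (v w : EuclideanSpace ℝ (Fin 2)) (c₁ c₂ : ℝ), v ≠ 0 ∧ w ≠ 0 ∧
      (inner ℝ v w : ℝ) = 0 ∧
      μ {x | (inner ℝ v x : ℝ) ≤ c₁ ∧ (inner ℝ w x : ℝ) ≤ c₂} = μ Set.univ / 4 ∧
      μ {x | (inner ℝ v x : ℝ) ≤ c₁ ∧ c₂ ≤ (inner ℝ w x : ℝ)} = μ Set.univ / 4 ∧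
      μ {x | c₁ ≤ (inner ℝ v x : ℝ) ∧ (inner ℝ w x : ℝ) ≤ c₂} = μ Set.univ / 4 ∧
      μ {x | c₁ ≤ (inner ℝ v x : ℝ) ∧ c₂ ≤ (inner ℝ w x : ℝ)} = μ Set.univ / 4 :=
  pancake_theorem_general μ hvanish
end
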